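/- arXiv:2302.03989 — 2 statements merged into one kernel-verified Lean document; each statement's English description precedes it below -/
import Mathlib

section
/- Let (G,E) be a contracting self-similar groupoid action on a finite directed graph E. Then asymptotic equivalence is a closed equivalence relation on the compact metric space E^{-∞}, and the limit space J = E^{-∞}/∼ with the quotient topology is compact and metrizable. -/
/-!
Self-similar groupoid actions on finite directed graphs, following
Brownlowe–Buss–Gonçalves–Hume–Sims–Whittaker,
"KK-duality for self-similar groupoid actions on graphs".

A directed graph is given by a vertex type `V`, an edge type `E` and
range/source maps `rE sE : E → V`.  A finite path is modelled as a list of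
edges together with a base vertex (its range): the list `[e₁, …, eₙ]` is the
path `e₁ … eₙ` read from left to right, so consecutive edges satisfy
`sE eᵢ = rE eᵢ₊₁`.  The groupoid of a self-similar action, its partial
multiplication, the action on finite paths and the restriction maps are
modelled as total functions whose values are only constrained (by the axioms
of the structure `SSA`) on their natural domains.
-/

universe u

namespace SSG

variable {V E : Type u}

/-- `l` is a trail: the source of each edge is the range of the next. -/
def IsTrail (rE sE : E → V) (l : List E) : Prop :=
  List.Chain' (fun e f => sE e = rE f) l

/-- `FromV rE sE v l` : `l` is a finite path whose range (leftmost vertex) is `v`. -/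
def FromV (rE sE : E → V) (v : V) (l : List E) : Prop :=
  IsTrail rE sE l ∧ ∀ e, l.head? = some e → rE e = v

/-- The source (rightmost vertex) of the finite path `l` with range `v`. -/
def trailSrc (sE : E → V) (v : V) (l : List E) : V :=
  l.getLast?.elim v sE

/-- A (faithful) self-similar groupoid action `(G, E)` on the directed graph with
vertices `V`, edges `E`, range map `rE` and source map `sE`.  Here `d`/`c` are
the domain/codomain maps of the groupoid `G` (its units are `unit v` for
`v : V`), `mul h g` is the composite `h ∘ g` (junk unless `d h = c g`),
`act g l` is `g · l` for finite paths `l` with range `d g` (junk otherwise)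
and `res g l` is the restriction `g|_l` (junk otherwise). -/
structure SSA (V E : Type u) (rE sE : E → V) : Type (u + 1) where
  G : Type u
  d : G → V
  c : G → V
  mul : G → G → G
  inv : G → G
  unit : V → G
  act : G → List E → List E
  res : G → List E → G
  d_unit : ∀ v, d (unit v) = v
  c_unit : ∀ v, c (unit v) = v
  d_mul : ∀ g h, d h = c g → d (mul h g) = d g
  c_mul : ∀ g h, d h = c g → c (mul h g) = c h
  mul_assoc : ∀ g h k, d h = c g → d k = c h → mul k (mul h g) = mul (mul k h) g
  unit_mul : ∀ g, mul (unit (c g)) g = g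
  mul_unit : ∀ g, mul g (unit (d g)) = g
  d_inv : ∀ g, d (inv g) = c g
  c_inv : ∀ g, c (inv g) = d g
  inv_mul : ∀ g, mul (inv g) g = unit (d g)
  mul_inv : ∀ g, mul g (inv g) = unit (c g)
  act_fromV : ∀ g l, FromV rE sE (d g) l → FromV rE sE (c g) (act g l)
  act_length : ∀ g l, FromV rE sE (d g) l → (act g l).length = l.length
  act_unit : ∀ v l, FromV rE sE v l → act (unit v) l = l
  act_mul : ∀ g h l, d h = c g → FromV rE sE (d g) l →
    act (mul h g) l = act h (act g l)
  faithful : ∀ g h, d g = d h → c g = c h →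
    (∀ l, FromV rE sE (d g) l → act g l = act h l) → g = h
  res_nil : ∀ g, res g [] = g
  d_res : ∀ g l, FromV rE sE (d g) l → d (res g l) = trailSrc sE (d g) l
  c_res : ∀ g l, FromV rE sE (d g) l → c (res g l) = trailSrc sE (c g) (act g l)
  res_append : ∀ g l m, FromV rE sE (d g) l →
    FromV rE sE (trailSrc sE (d g) l) m → res g (l ++ m) = res (res g l) m
  act_append : ∀ g l m, FromV rE sE (d g) l →
    FromV rE sE (trailSrc sE (d g) l) m →
    act g (l ++ m) = act g l ++ act (res g l) m

variable {rE sE : E → V}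

/-- `F` is a contracting core for the self-similar groupoid action `A`. -/
def SSA.IsCore (A : SSA V E rE sE) (F : Set A.G) : Prop :=
  F.Finite ∧ ∀ g : A.G, ∃ n : ℕ, ∀ l : List E,
    FromV rE sE (A.d g) l → l.length = n → A.res g l ∈ F

/-- The action is contracting if it admits a contracting core. -/
def SSA.Contracting (A : SSA V E rE sE) : Prop :=
  ∃ F : Set A.G, A.IsCore F

/-- The nucleus: the intersection of all contracting cores. -/
def SSA.nucleus (A : SSA V E rE sE) : Set A.G :=
  ⋂₀ {F : Set A.G | A.IsCore F}

/-- The action is recurrent. -/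
def SSA.Recurrent (A : SSA V E rE sE) : Prop :=
  ∀ e f : E, ∀ h : A.G, A.d h = sE e → A.c h = sE f →
    ∃ g : A.G, A.d g = rE e ∧ A.act g [e] = [f] ∧ A.res g [e] = h

/-- The action is level-transitive: any two paths of the same length lie in
one orbit. -/
def SSA.LevelTransitive (A : SSA V E rE sE) : Prop :=
  ∀ (v w : V) (l m : List E), FromV rE sE v l → FromV rE sE w m →
    l.length = m.length → ∃ g : A.G, A.d g = v ∧ A.c g = w ∧ A.act g l = m

/-- Every element of the groupoid is a finite composable product of
elements of `H`. -/
def SSA.GeneratedBy (A : SSA V E rE sE) (H : Set A.G) : Prop :=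
  ∀ g : A.G, ∃ (h : A.G) (t : List A.G), h ∈ H ∧ (∀ k ∈ t, k ∈ H) ∧
    List.Chain' (fun a b => A.d a = A.c b) (h :: t) ∧ t.foldl A.mul h = g

/-- The groupoid of the action is finitely generated. -/
def SSA.FinitelyGenerated (A : SSA V E rE sE) : Prop :=
  ∃ H : Set A.G, H.Finite ∧ A.GeneratedBy H

/-- The graph has no sources: every vertex receives an edge. -/
def NoSources (rE : E → V) : Prop := ∀ v : V, ∃ e : E, rE e = v

/-- The graph has no sinks: every vertex emits an edge. -/
def NoSinks (sE : E → V) : Prop := ∀ v : V, ∃ e : E, sE e = v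

/-- The graph is strongly connected: it has an edge, and any ordered pair of
vertices is joined by a finite path. -/
def StronglyConnected (rE sE : E → V) : Prop :=
  Nonempty E ∧ ∀ v w : V, ∃ l : List E, FromV rE sE v l ∧ trailSrc sE v l = w

/-- Right-infinite paths `y₁ y₂ y₃ …` (here `y k` is the edge `y_{k+1}`). -/
def RightPath (rE sE : E → V) : Type u :=
  {y : ℕ → E // ∀ k, sE (y k) = rE (y (k + 1))}

/-- The initial segment `y₁ … yₙ` of a right-infinite path. -/
def RightPath.trunc (y : RightPath rE sE) (n : ℕ) : List E :=
  (List.range n).map y.1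

/-- The action is regular: whenever `g` fixes a right-infinite path `y`
(equivalently, all its initial segments), `g` acts trivially on some cylinder
neighbourhood of `y`: some initial segment `μ` of `y` satisfies `g·μ = μ` and
`g|_μ = s(μ)`. -/
def SSA.Regular (A : SSA V E rE sE) : Prop :=
  ∀ (g : A.G) (y : RightPath rE sE), A.d g = rE (y.1 0) →
    (∀ n : ℕ, A.act g (y.trunc n) = y.trunc n) →
    ∃ n : ℕ, A.act g (y.trunc n) = y.trunc n ∧
      A.res g (y.trunc n) = A.unit (trailSrc sE (A.d g) (y.trunc n))

/-- Left-infinite paths `… x₋₂ x₋₁` (here `x k` is the edge `x_{-(k+1)}`). -/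
def LeftPath (rE sE : E → V) : Type u :=
  {x : ℕ → E // ∀ k, sE (x (k + 1)) = rE (x k)}

instance [TopologicalSpace E] : TopologicalSpace (LeftPath rE sE) :=
  inferInstanceAs (TopologicalSpace {x : ℕ → E // ∀ k, sE (x (k + 1)) = rE (x k)})

/-- The finite path `x₋ₘ … x₋₁`. -/
def LeftPath.trunc (x : LeftPath rE sE) (m : ℕ) : List E :=
  ((List.range m).reverse).map x.1

/-- The shift on left-infinite paths, deleting the rightmost edge. -/
def LeftPath.shift (x : LeftPath rE sE) : LeftPath rE sE :=
  ⟨fun k => x.1 (k + 1), fun k => x.2 (k + 1)⟩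

/-- Asymptotic equivalence of left-infinite paths: some sequence `(gₙ)` in the
groupoid with finitely many distinct values satisfies
`gₙ · (xₙ … x₋₁) = yₙ … y₋₁` for all `n < 0`. -/
def SSA.AsympEq (A : SSA V E rE sE) (x y : LeftPath rE sE) : Prop :=
  ∃ g : ℕ → A.G, (Set.range g).Finite ∧
    (∀ m : ℕ, A.d (g m) = rE (x.1 m)) ∧
    (∀ m : ℕ, A.act (g m) (x.trunc (m + 1)) = y.trunc (m + 1))

/-- The cylinder set `Z(l]` of left-infinite paths ending in `l`. -/
def cylL (rE sE : E → V) (l : List E) : Set (LeftPath rE sE) :=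
  {x : LeftPath rE sE | x.trunc l.length = l}

/-- The basic subset `U_l` of the limit space attached to a finite path `l`
with range `v`. -/
def SSA.limitU (A : SSA V E rE sE) (v : V) (l : List E) :
    Set (Quot A.AsympEq) :=
  {z : Quot A.AsympEq | ∀ x : LeftPath rE sE, Quot.mk A.AsympEq x = z →
    ∃ g ∈ A.nucleus, A.d g = v ∧ x ∈ cylL rE sE (A.act g l)}

/-- Bi-infinite paths `… x₋₁ x₀ x₁ …`. -/
def BiPath (rE sE : E → V) : Type u :=
  {x : ℤ → E // ∀ k : ℤ, sE (x k) = rE (x (k + 1))}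

instance [TopologicalSpace E] : TopologicalSpace (BiPath rE sE) :=
  inferInstanceAs (TopologicalSpace {x : ℤ → E // ∀ k : ℤ, sE (x k) = rE (x (k + 1))})

/-- The finite segment `xₙ x_{n+1} … x_{n+m-1}` of a bi-infinite path. -/
def BiPath.seg (x : BiPath rE sE) (n : ℤ) (m : ℕ) : List E :=
  (List.range m).map fun i => x.1 (n + i)

/-- Asymptotic equivalence of bi-infinite paths: some sequence `(gₙ)_{n ∈ ℤ}`
with finitely many distinct values satisfies
`gₙ · (xₙ x_{n+1} …) = yₙ y_{n+1} …` for all `n`. -/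
def SSA.AsympEqZ (A : SSA V E rE sE) (x y : BiPath rE sE) : Prop :=
  ∃ g : ℤ → A.G, (Set.range g).Finite ∧
    (∀ n : ℤ, A.d (g n) = rE (x.1 n)) ∧
    (∀ (n : ℤ) (m : ℕ), A.act (g n) (x.seg n m) = y.seg n m)

/-- The left-infinite path `x(-∞, n) = … x_{n-1} xₙ` of a bi-infinite path. -/
def BiPath.tail (x : BiPath rE sE) (n : ℤ) : LeftPath rE sE :=
  ⟨fun k => x.1 (n - k), by
    intro k
    have h := x.2 (n - ((k : ℤ) + 1))
    have h2 : n - ((k : ℤ) + 1) + 1 = n - (k : ℤ) := by ring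
    have h3 : (n - ((k + 1 : ℕ) : ℤ)) = n - ((k : ℤ) + 1) := by push_cast; ring
    show sE (x.1 (n - ((k + 1 : ℕ) : ℤ))) = rE (x.1 (n - (k : ℤ)))
    rw [h3, ← h2]
    exact h⟩

/-- The translation `τ` on bi-infinite paths, `(τ x)ₙ = x_{n-1}`. -/
def BiPath.translate (x : BiPath rE sE) : BiPath rE sE :=
  ⟨fun m => x.1 (m - 1), by
    intro k
    have h := x.2 (k - 1)
    have h2 : (k - 1 + 1 : ℤ) = k + 1 - 1 := by ring
    rw [h2] at h
    exact h⟩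

/-- The shift homeomorphism `σ̃_∞` on the inverse limit `lim← (J, T)`. -/
def solShift {J : Type*} (T : J → J)
    (z : {z : ℕ → J // ∀ n, T (z (n + 1)) = z n}) :
    {z : ℕ → J // ∀ n, T (z (n + 1)) = z n} :=
  ⟨fun n => match n with
    | 0 => T (z.1 0)
    | m + 1 => z.1 m,
   fun n => match n with
    | 0 => rfl
    | m + 1 => z.2 m⟩

/-- The distance function of a bundled metric space. -/
def mdist {Y : Type*} (m : MetricSpace Y) (a b : Y) : ℝ := by
  letI := m; exact dist a b

/-- The open ball of a bundled metric space. -/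
def mball {Y : Type*} (m : MetricSpace Y) (a : Y) (r : ℝ) : Set Y := by
  letI := m; exact Metric.ball a r

/-- The topology induced by a bundled metric space. -/
def mtop {Y : Type*} (m : MetricSpace Y) : TopologicalSpace Y := by
  letI := m; exact inferInstance

/-!
Fix a contracting core `F`. The set of all restrictions `f|_μ` (`f ∈ F`) is again finite, and
every `g` restricted along a long enough path lands in it. Hence if `gₙ · (xₙ … x₋₁) = yₙ … y₋₁`
with finitely many distinct `gₙ`, and `N` is a contraction length for all of them, restricting
`gₙ₋N` along `xₙ₋N … xₙ₋₁` shows that every truncation of `y` is the image of the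
corresponding truncation of `x` under an element of one fixed finite set, and conversely. So
asymptotic equivalence is an intersection of conditions on finitely many coordinates, hence
closed. For a closed equivalence relation on a compact space the quotient map is closed with
compact fibres; this makes the quotient of the compact metrizable space `E^{-∞}` Hausdorff and
second countable, hence metrizable.
-/

end SSG

open Filter Set Topology TopologicalSpace

section ClosedQuotient

variable {X Y : Type*} [TopologicalSpace X] [TopologicalSpace Y] {f : X → Y}

theorem IsClosedMap.t2Space_of_surjective [NormalSpace X] (hf : IsClosedMap f)
    (hcont : Continuous f) (hsurj : Function.Surjective f)
    (hfib : ∀ y, IsClosed (f ⁻¹' {y})) : T2Space Y := by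
  refine t2Space_iff_disjoint_nhds.mpr fun y y' hne => ?_
  change Disjoint (𝓝 y) (𝓝 y')
  rw [← Filter.disjoint_comap_iff hsurj, hf.comap_nhds_eq hcont, hf.comap_nhds_eq hcont]
  exact disjoint_nhdsSet_nhdsSet (hfib y) (hfib y')
    ((disjoint_singleton.mpr hne).preimage f)

theorem IsClosedMap.secondCountableTopology_of_surjective [SecondCountableTopology X]
    (hf : IsClosedMap f) (hcont : Continuous f) (hsurj : Function.Surjective f)
    (hfib : ∀ y, IsCompact (f ⁻¹' {y})) : SecondCountableTopology Y := by
  obtain ⟨b, hbc, -, hb⟩ := exists_countable_basis X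
  have hbasis : IsTopologicalBasis
      ((fun t : Set (Set X) => kernImage f (⋃₀ t)) '' {t | t.Finite ∧ t ⊆ b}) := by
    refine isTopologicalBasis_of_isOpen_of_nhds ?_ fun y W hyW hW => ?_
    · rintro _ ⟨t, ⟨-, htb⟩, rfl⟩
      exact isClosedMap_iff_kernImage.mp hf (isOpen_sUnion fun u hu => hb.isOpen (htb hu))
    · have hcover : f ⁻¹' {y} ⊆ ⋃ u ∈ {u ∈ b | u ⊆ f ⁻¹' W}, u := fun x hx => by
        have hxW : f x ∈ W := (mem_singleton_iff.mp hx).symm ▸ hyW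
        obtain ⟨u, hub, hxu, huW⟩ := hb.exists_subset_of_mem_open hxW (hW.preimage hcont)
        exact mem_biUnion ⟨hub, huW⟩ hxu
      obtain ⟨t, htb, htf, hyt⟩ :=
        (hfib y).elim_finite_subcover_image (fun u hu => hb.isOpen hu.1) hcover
      refine ⟨_, ⟨t, ⟨htf, fun u hu => (htb hu).1⟩, rfl⟩, ?_, ?_⟩
      · exact fun x hx => sUnion_eq_biUnion ▸ hyt hx
      · intro z hz
        obtain ⟨x, rfl⟩ := hsurj z
        obtain ⟨u, hut, hxu⟩ := hz rfl
        exact (htb hut).2 hxu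
  exact hbasis.secondCountableTopology ((countable_ofPred_finite_subset hbc).image _)

end ClosedQuotient

section QuotOfIsClosed

variable {X : Type*} [TopologicalSpace X] {r : X → X → Prop}

theorem isClosed_preimage_quot_mk_singleton (hr : Equivalence r)
    (hc : IsClosed {p : X × X | r p.1 p.2}) (z : Quot r) : IsClosed (Quot.mk r ⁻¹' {z}) := by
  obtain ⟨x₀, rfl⟩ := Quot.exists_rep z
  have hfib : Quot.mk r ⁻¹' {Quot.mk r x₀} = (fun x => (x, x₀)) ⁻¹' {p | r p.1 p.2} := by
    ext x
    exact hr.quot_mk_eq_iff x x₀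
  rw [hfib]
  exact hc.preimage (by fun_prop)

theorem isClosedMap_quot_mk [CompactSpace X] (hr : Equivalence r)
    (hc : IsClosed {p : X × X | r p.1 p.2}) : IsClosedMap (Quot.mk r) := by
  intro C hC
  rw [← isQuotientMap_quot_mk.isClosed_preimage]
  have hsat : Quot.mk r ⁻¹' (Quot.mk r '' C) = Prod.snd '' ({p | r p.1 p.2} ∩ C ×ˢ univ) := by
    ext x
    simp [hr.quot_mk_eq_iff, and_comm]
  rw [hsat]
  exact isClosedMap_snd_of_compactSpace _ (hc.inter (hC.prod isClosed_univ))

theorem metrizableSpace_quot_of_isClosed [CompactSpace X] [T2Space X] [SecondCountableTopology X]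
    (hr : Equivalence r) (hc : IsClosed {p : X × X | r p.1 p.2}) :
    MetrizableSpace (Quot r) := by
  have hmk := isClosedMap_quot_mk hr hc
  have hfib := isClosed_preimage_quot_mk_singleton hr hc
  have := hmk.t2Space_of_surjective continuous_quot_mk Quot.mk_surjective hfib
  have := hmk.secondCountableTopology_of_surjective continuous_quot_mk Quot.mk_surjective
    fun z => (hfib z).isCompact
  exact metrizableSpace_of_t3_secondCountable _

end QuotOfIsClosed

namespace SSG

variable {V E : Type u} {rE sE : E → V}

theorem fromV_nil (v : V) : FromV rE sE v [] := ⟨List.isChain_nil, by simp⟩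

theorem fromV_cons (v : V) (e : E) (l : List E) :
    FromV rE sE v (e :: l) ↔ rE e = v ∧ FromV rE sE (sE e) l := by
  constructor
  · rintro ⟨h1, h2⟩
    rw [IsTrail, List.Chain', List.isChain_cons] at h1
    exact ⟨h2 e rfl, h1.2, fun f hf => (h1.1 f hf).symm⟩
  · rintro ⟨h0, h1, h2⟩
    constructor
    · rw [IsTrail, List.Chain', List.isChain_cons]
      exact ⟨fun f hf => (h2 f hf).symm, h1⟩
    · intro f hf
      simp only [List.head?_cons, Option.some.injEq] at hf
      exact hf ▸ h0

theorem trailSrc_cons (v : V) (e : E) (l : List E) :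
    trailSrc sE v (e :: l) = trailSrc sE (sE e) l := by
  rcases l.eq_nil_or_concat with rfl | ⟨l', f, rfl⟩
  · simp [trailSrc]
  · simp only [trailSrc, List.concat_eq_append, ← List.cons_append, List.getLast?_concat,
      Option.elim]

theorem fromV_append (v : V) (l m : List E) :
    FromV rE sE v (l ++ m) ↔ FromV rE sE v l ∧ FromV rE sE (trailSrc sE v l) m := by
  induction l generalizing v with
  | nil => simp [fromV_nil, trailSrc]
  | cons e l ih => rw [List.cons_append, fromV_cons, fromV_cons, ih, and_assoc, trailSrc_cons]

namespace LeftPath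

theorem trunc_succ (x : LeftPath rE sE) (n : ℕ) : x.trunc (n + 1) = x.1 n :: x.trunc n := by
  simp [LeftPath.trunc, List.range_succ]

theorem length_trunc (x : LeftPath rE sE) (n : ℕ) : (x.trunc n).length = n := by
  simp [LeftPath.trunc]

theorem drop_trunc (x : LeftPath rE sE) (n k : ℕ) : (x.trunc (n + k)).drop k = x.trunc n := by
  induction k with
  | zero => rfl
  | succ k ih => rw [← Nat.add_assoc, trunc_succ, List.drop_succ_cons, ih]

theorem fromV_trunc (x : LeftPath rE sE) (n : ℕ) : FromV rE sE (sE (x.1 n)) (x.trunc n) := by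
  induction n with
  | zero => exact fromV_nil _
  | succ n ih => rw [trunc_succ]; exact (fromV_cons _ _ _).mpr ⟨(x.2 n).symm, ih⟩

theorem fromV_trunc_succ_iff (x : LeftPath rE sE) (n : ℕ) (v : V) :
    FromV rE sE v (x.trunc (n + 1)) ↔ rE (x.1 n) = v := by
  rw [trunc_succ, fromV_cons]
  exact and_iff_left (fromV_trunc x n)

variable [TopologicalSpace E] [DiscreteTopology E]

theorem isLocallyConstant_trunc (n : ℕ) :
    IsLocallyConstant fun x : LeftPath rE sE => x.trunc n := by
  have hfin : (fun x : LeftPath rE sE => x.trunc n) =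
      (fun v : Fin n → E => ((List.finRange n).reverse).map v) ∘
        fun x (i : Fin n) => x.1 i := by
    funext x
    simp only [Function.comp_apply, LeftPath.trunc, ← List.map_coe_finRange_eq_range,
      ← List.map_reverse, List.map_map]
    rfl
  rw [hfin]
  exact (IsLocallyConstant.of_discrete _).comp_continuous
    (continuous_pi fun i => (continuous_apply _).comp continuous_subtype_val)

instance : T2Space (LeftPath rE sE) :=
  inferInstanceAs (T2Space {x : ℕ → E // ∀ k, sE (x (k + 1)) = rE (x k)})

instance [Finite E] : SecondCountableTopology (LeftPath rE sE) :=
  inferInstanceAs (SecondCountableTopology {x : ℕ → E | ∀ k, sE (x (k + 1)) = rE (x k)})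

instance [Finite E] : CompactSpace (LeftPath rE sE) := by
  have hcl : IsClosed {x : ℕ → E | ∀ k, sE (x (k + 1)) = rE (x k)} := by
    rw [ofPred_forall]
    exact isClosed_iInter fun k => (isClosed_discrete {q : E × E | sE q.1 = rE q.2}).preimage
      (f := fun x : ℕ → E => (x (k + 1), x k)) (by fun_prop)
  exact isCompact_iff_compactSpace.mp hcl.isCompact

end LeftPath

namespace SSA

variable (A : SSA V E rE sE)

theorem act_res_of_act_append {g : A.G} {l t l' t' : List E}
    (hlt : FromV rE sE (A.d g) (l ++ t)) (hlen : l.length = l'.length)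
    (hact : A.act g (l ++ t) = l' ++ t') :
    FromV rE sE (A.d (A.res g l)) t ∧ A.act (A.res g l) t = t' := by
  obtain ⟨hl, ht⟩ := (fromV_append _ _ _).mp hlt
  rw [A.act_append g l t hl ht] at hact
  exact ⟨by rwa [A.d_res g l hl], (List.append_inj hact (by rw [A.act_length g l hl, hlen])).2⟩

theorem res_take_drop {g : A.G} {l : List E} (hl : FromV rE sE (A.d g) l) (k : ℕ) :
    FromV rE sE (A.d g) (l.take k) ∧ FromV rE sE (A.d (A.res g (l.take k))) (l.drop k) ∧
      A.res (A.res g (l.take k)) (l.drop k) = A.res g l := by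
  obtain ⟨h₁, h₂⟩ := (fromV_append _ _ _).mp (l.take_append_drop k ▸ hl)
  refine ⟨h₁, by rwa [A.d_res g _ h₁], ?_⟩
  rw [← A.res_append g _ _ h₁ h₂, l.take_append_drop]

theorem exists_res_act_trunc {x y : LeftPath rE sE} {g : A.G} {n k : ℕ}
    (hx : FromV rE sE (A.d g) (x.trunc (n + k)))
    (hact : A.act g (x.trunc (n + k)) = y.trunc (n + k)) :
    ∃ l, FromV rE sE (A.d g) l ∧ l.length = k ∧
      FromV rE sE (A.d (A.res g l)) (x.trunc n) ∧ A.act (A.res g l) (x.trunc n) = y.trunc n := by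
  have hsplit : ∀ z : LeftPath rE sE, z.trunc (n + k) = (z.trunc (n + k)).take k ++ z.trunc n :=
    fun z => by rw [← z.drop_trunc n k, List.take_append_drop]
  have hlen : ∀ z : LeftPath rE sE, ((z.trunc (n + k)).take k).length = k :=
    fun z => by simp [LeftPath.length_trunc]
  rw [hsplit x] at hx hact
  rw [hsplit y] at hact
  exact ⟨_, ((fromV_append _ _ _).mp hx).1, hlen x,
    A.act_res_of_act_append hx (by rw [hlen, hlen]) hact⟩

theorem c_eq_of_act_trunc {x y : LeftPath rE sE} {g : A.G} {m : ℕ}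
    (hd : A.d g = rE (x.1 m)) (hact : A.act g (x.trunc (m + 1)) = y.trunc (m + 1)) :
    A.c g = rE (y.1 m) := by
  have hy := A.act_fromV g _ ((x.fromV_trunc_succ_iff m _).mpr hd.symm)
  rw [hact, LeftPath.fromV_trunc_succ_iff] at hy
  exact hy.symm

theorem asympEq_equivalence [Finite E] : Equivalence A.AsympEq where
  refl x := ⟨fun m => A.unit (rE (x.1 m)), ((finite_range rE).image A.unit).subset (by grind),
    fun m => A.d_unit _, fun m => A.act_unit _ _ ((x.fromV_trunc_succ_iff m _).mpr rfl)⟩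
  symm := by
    rintro x y ⟨g, hgfin, hgd, hgact⟩
    refine ⟨fun m => A.inv (g m), (hgfin.image A.inv).subset (by grind),
      fun m => by rw [A.d_inv, A.c_eq_of_act_trunc (hgd m) (hgact m)], fun m => ?_⟩
    have hx := (x.fromV_trunc_succ_iff m _).mpr (hgd m).symm
    rw [← hgact m, ← A.act_mul _ _ _ (A.d_inv _) hx, A.inv_mul, A.act_unit _ _ hx]
  trans := by
    rintro x y z ⟨g₁, hfin₁, hd₁, hact₁⟩ ⟨g₂, hfin₂, hd₂, hact₂⟩
    have hdc : ∀ m, A.d (g₂ m) = A.c (g₁ m) := fun m => by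
      rw [hd₂ m, A.c_eq_of_act_trunc (hd₁ m) (hact₁ m)]
    refine ⟨fun m => A.mul (g₂ m) (g₁ m), (hfin₂.image2 A.mul hfin₁).subset ?_,
      fun m => by rw [A.d_mul _ _ (hdc m), hd₁ m], fun m => ?_⟩
    · rintro _ ⟨m, rfl⟩
      exact mem_image2_of_mem ⟨m, rfl⟩ ⟨m, rfl⟩
    · rw [A.act_mul _ _ _ (hdc m) ((x.fromV_trunc_succ_iff m _).mpr (hd₁ m).symm), hact₁ m,
        hact₂ m]

def restrictions (F : Set A.G) : Set A.G :=
  {k | ∃ f ∈ F, ∃ l, FromV rE sE (A.d f) l ∧ A.res f l = k}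

theorem restrictions_subset_image2 {S : Set A.G} {M : ℕ}
    (hS : ∀ h ∈ S, ∀ l, FromV rE sE (A.d h) l → M ≤ l.length →
      ∃ k, 0 < k ∧ k ≤ l.length ∧ A.res h (l.take k) ∈ S) :
    A.restrictions S ⊆ image2 A.res S {l | l.length < M} := by
  rintro _ ⟨h, hh, l, hl, rfl⟩
  induction hlen : l.length using Nat.strong_induction_on generalizing h l with
  | _ L ih =>
    by_cases hLM : L < M
    · exact mem_image2_of_mem hh (show l.length < M by omega)
    obtain ⟨k, hk, hkl, hres⟩ := hS h hh l hl (by omega)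
    obtain ⟨-, hdrop, hsplit⟩ := A.res_take_drop hl k
    rw [← hsplit]
    exact ih _ (by simp only [List.length_drop]; omega) _ hres _ hdrop rfl

variable {A}

theorem IsCore.finite_restrictions [Finite E] {F : Set A.G} (hF : A.IsCore F) :
    (A.restrictions F).Finite := by
  obtain ⟨hFfin, hcore⟩ := hF
  choose n hn using hcore
  obtain ⟨M, hM⟩ := (hFfin.image2 (fun f e => n (A.res f [e])) (finite_univ (α := E))).bddAbove
  refine (hFfin.image2 A.res (List.finite_length_lt E (M + 1))).subset
    (A.restrictions_subset_image2 fun f hf l hl hMl => ?_)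
  -- peel off one edge first: the contraction length of `f` itself may be `0`
  obtain ⟨e, l', rfl⟩ : ∃ e l', l = e :: l' := List.exists_cons_of_length_pos (by omega)
  rw [List.length_cons] at hMl
  have hnM : n (A.res f [e]) ≤ M := hM (mem_image2_of_mem hf (mem_univ e))
  obtain ⟨he, hl'⟩ := (fromV_cons _ _ _).mp hl
  have hfe : FromV rE sE (A.d f) [e] := (fromV_cons _ _ _).mpr ⟨he, fromV_nil _⟩
  have hd : A.d (A.res f [e]) = trailSrc sE (A.d f) [e] := A.d_res f [e] hfe
  obtain ⟨htake, -, -⟩ := A.res_take_drop (l := l') (by rw [hd]; exact hl') (n (A.res f [e]))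
  refine ⟨n (A.res f [e]) + 1, by omega, by rw [List.length_cons]; omega, ?_⟩
  rw [List.take_succ_cons, ← List.singleton_append, A.res_append f [e] _ hfe (hd ▸ htake)]
  exact hn _ _ htake (List.length_take_of_le (by omega))

theorem IsCore.exists_forall_res_mem {F : Set A.G} (hF : A.IsCore F) (g : A.G) :
    ∃ n, ∀ l, FromV rE sE (A.d g) l → n ≤ l.length → A.res g l ∈ A.restrictions F := by
  obtain ⟨n, hn⟩ := hF.2 g
  refine ⟨n, fun l hl hnl => ?_⟩
  obtain ⟨htake, hdrop, hsplit⟩ := A.res_take_drop hl n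
  exact ⟨_, hn _ htake (List.length_take_of_le hnl), _, hdrop, hsplit⟩

theorem IsCore.asympEq_iff [Finite E] {F : Set A.G} (hF : A.IsCore F) {x y : LeftPath rE sE} :
    A.AsympEq x y ↔ ∀ m, ∃ h ∈ A.restrictions F,
      FromV rE sE (A.d h) (x.trunc (m + 1)) ∧ A.act h (x.trunc (m + 1)) = y.trunc (m + 1) := by
  constructor
  · rintro ⟨g, hgfin, hgd, hgact⟩ m
    choose n hn using hF.exists_forall_res_mem
    obtain ⟨N, hN⟩ := (hgfin.image n).bddAbove
    have hx := (x.fromV_trunc_succ_iff (m + N) _).mpr (hgd (m + N)).symm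
    rw [← Nat.add_right_comm] at hx
    obtain ⟨l, hl, hlen, hxl, hact⟩ :=
      A.exists_res_act_trunc hx (by rw [Nat.add_right_comm]; exact hgact (m + N))
    exact ⟨_, hn _ l hl (hlen ▸ hN ⟨_, ⟨m + N, rfl⟩, rfl⟩), hxl, hact⟩
  · intro h
    choose g hgF hgx hgact using h
    exact ⟨g, hF.finite_restrictions.subset (range_subset_iff.mpr hgF),
      fun m => ((x.fromV_trunc_succ_iff m _).mp (hgx m)).symm, hgact⟩

theorem IsCore.isClosed_setOf_asympEq [Finite E] [TopologicalSpace E] [DiscreteTopology E]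
    {F : Set A.G} (hF : A.IsCore F) :
    IsClosed {p : LeftPath rE sE × LeftPath rE sE | A.AsympEq p.1 p.2} := by
  simp only [hF.asympEq_iff, ofPred_forall]
  refine isClosed_iInter fun m => ?_
  have hloc : IsLocallyConstant fun p : LeftPath rE sE × LeftPath rE sE =>
      (p.1.trunc (m + 1), p.2.trunc (m + 1)) :=
    ((LeftPath.isLocallyConstant_trunc _).comp_continuous continuous_fst).prodMk
      ((LeftPath.isLocallyConstant_trunc _).comp_continuous continuous_snd)
  exact isOpen_compl_iff.mp (hloc {q : List E × List E | ∃ h ∈ A.restrictions F,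
    FromV rE sE (A.d h) q.1 ∧ A.act h q.1 = q.2}ᶜ)

end SSA

theorem limitSpace_compact_metrizable_general
    [Fintype E] [TopologicalSpace E] [DiscreteTopology E]
    (rE sE : E → V) (A : SSA V E rE sE) (hA : A.Contracting) :
    Equivalence A.AsympEq ∧
    IsClosed {p : LeftPath rE sE × LeftPath rE sE | A.AsympEq p.1 p.2} ∧
    CompactSpace (Quot A.AsympEq) ∧
    TopologicalSpace.MetrizableSpace (Quot A.AsympEq) := by
  obtain ⟨F, hF⟩ := hA
  have hequiv := A.asympEq_equivalence
  have hclosed := hF.isClosed_setOf_asympEq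
  exact ⟨hequiv, hclosed, inferInstance, metrizableSpace_quot_of_isClosed hequiv hclosed⟩

/-- asymptotic equivalence is a closed equivalence relation on
`E^{-∞}` and the limit space is compact and metrizable. -/
theorem limitSpace_compact_metrizable
    [Fintype V] [Fintype E] [TopologicalSpace E] [DiscreteTopology E]
    (rE sE : E → V) (A : SSA V E rE sE) (hA : A.Contracting) :
    Equivalence A.AsympEq ∧
    IsClosed {p : LeftPath rE sE × LeftPath rE sE | A.AsympEq p.1 p.2} ∧
    CompactSpace (Quot A.AsympEq) ∧
    TopologicalSpace.MetrizableSpace (Quot A.AsympEq) :=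
  limitSpace_compact_metrizable_general rE sE A hA

end SSG
end

section
/- Let (G,E) be a regular self-similar groupoid action on a finite directed graph E with no sources. Then for every finite subset F ⊆ G there exists k ∈ ℕ such that for all g, h ∈ F with d(g) = d(h) and every finite path μ with r(μ) = d(g) and |μ| ≥ k, if g·μ = h·μ then g|_μ = h|_μ. -/
/-!
Self-similar groupoid actions on finite directed graphs, following
Brownlowe–Buss–Gonçalves–Hume–Sims–Whittaker,
"KK-duality for self-similar groupoid actions on graphs".

A directed graph is given by a vertex type `V`, an edge type `E` and
range/source maps `rE sE : E → V`.  A finite path is modelled as a list of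
edges together with a base vertex (its range): the list `[e₁, …, eₙ]` is the
path `e₁ … eₙ` read from left to right, so consecutive edges satisfy
`sE eᵢ = rE eᵢ₊₁`.  The groupoid of a self-similar action, its partial
multiplication, the action on finite paths and the restriction maps are
modelled as total functions whose values are only constrained (by the axioms
of the structure `SSA`) on their natural domains.
-/

universe u

namespace SSG

variable {V E : Type u}

variable {rE sE : E → V}

/-!
Fix `g, h ∈ F` with the same domain. The paths `μ` with `g·μ = h·μ` but `g|_μ ≠ h|_μ` form a
prefix-closed set, so if they were unbounded in length, Kőnig's lemma (the graph is finite) would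
produce an infinite path `y` all of whose initial segments are of this kind. Then `h⁻¹g` fixes
`y`, so by regularity `(h⁻¹g)|_μ = (h|_μ)⁻¹ g|_μ` is a unit for some initial segment `μ` of `y`,
i.e. `g|_μ = h|_μ`, a contradiction. Finitely many pairs then give a uniform bound.
-/

open Filter

theorem exists_seq_forall_map_range_of_prefix_closed {α : Type*} [Finite α] {S : List α → Prop}
    (hpre : ∀ l m, S (l ++ m) → S l) (hlong : ∀ n, ∃ l, S l ∧ n ≤ l.length) :
    ∃ y : ℕ → α, ∀ n, S ((List.range n).map y) := by
  let T (i : ℕ) := {l : List α // S l ∧ l.length = i}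
  have (i : ℕ) : Finite (T i) :=
    Finite.of_injective (β := List.Vector α i) (fun l => ⟨l.1, l.2.2⟩)
      fun _ _ h => Subtype.ext (congrArg List.Vector.toList h)
  have take_mem {l : List α} (hl : S l) (i : ℕ) : S (l.take i) :=
    hpre _ (l.drop i) (by rwa [List.take_append_drop])
  have (i : ℕ) : Nonempty (T i) := by
    obtain ⟨l, hl, hi⟩ := hlong i
    exact ⟨⟨l.take i, take_mem hl i, List.length_take_of_le hi⟩⟩
  let π {i j : ℕ} (hij : i ≤ j) (l : T j) : T i :=
    ⟨l.1.take i, take_mem l.2.1 i, by simp [l.2.2, hij]⟩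
  obtain ⟨f, hf⟩ := exists_seq_forall_proj_of_forall_finite π
    (fun i l => Subtype.ext (List.take_of_length_le l.2.2.le))
    (fun i j k hij hjk l => Subtype.ext (by simp [π, List.take_take, hij]))
    (fun _ _ => Set.toFinite _)
  refine ⟨fun k => (f (k + 1)).1[k]'(by simp [(f (k + 1)).2.2]), fun n => ?_⟩
  convert (f n).2.1
  refine List.ext_getElem (by simp [(f n).2.2]) fun k hk _ => ?_
  have hkn : k < n := by simpa using hk
  have hfk : (f ((List.range n)[k]'(by simpa) + 1)).1 = (f n).1.take (k + 1) := by
    rw [List.getElem_range, ← hf hkn]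
  simp only [List.getElem_map, List.getElem_of_eq hfk, List.getElem_take, List.getElem_range]

section Paths

variable {v : V} {e : E} {l m : List E}

lemma isTrail_iff_isChain : IsTrail rE sE l ↔ l.IsChain (fun e f => sE e = rE f) := Iff.rfl

lemma fromV_singleton : FromV rE sE v [e] ↔ rE e = v := by
  simp [FromV, isTrail_iff_isChain]

lemma trailSrc_concat : trailSrc sE v (l ++ [e]) = sE e := by
  simp [trailSrc]

lemma fromV_append_iff :
    FromV rE sE v (l ++ m) ↔ FromV rE sE v l ∧ FromV rE sE (trailSrc sE v l) m := by
  rcases l.eq_nil_or_concat with rfl | ⟨l, e, rfl⟩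
  · simp [FromV, isTrail_iff_isChain, trailSrc]
  · simp only [FromV, isTrail_iff_isChain, trailSrc_concat, List.concat_eq_append,
      List.append_assoc, List.cons_append, List.nil_append, List.isChain_append, List.isChain_cons,
      List.head?_append, List.head?_cons, List.head?_nil, Option.or_some, Option.mem_def,
      Option.some.injEq, forall_eq', reduceCtorEq, IsEmpty.forall_iff, implies_true,
      List.IsChain.nil, and_self, true_and]
    grind

lemma FromV.rE_head (h : FromV rE sE v l) (hne : l ≠ []) : rE (l.head hne) = v :=
  h.2 _ (List.head?_eq_some_head hne)

lemma rE_zero_of_forall_fromV {y : ℕ → E} (hy : ∀ n, FromV rE sE v ((List.range n).map y)) :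
    rE (y 0) = v :=
  fromV_singleton.1 (by simpa using hy 1)

lemma sE_eq_rE_succ_of_forall_fromV {y : ℕ → E}
    (hy : ∀ n, FromV rE sE v ((List.range n).map y)) (k : ℕ) : sE (y k) = rE (y (k + 1)) := by
  have h := hy (k + 2)
  simp only [List.range_succ, List.map_append, List.map_singleton, fromV_append_iff,
    trailSrc_concat, fromV_singleton] at h
  exact h.2.symm

end Paths

namespace SSA

variable (A : SSA V E rE sE) {g h : A.G} {l m : List E}

lemma res_unit (v : V) (hl : FromV rE sE v l) :
    A.res (A.unit v) l = A.unit (trailSrc sE v l) := by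
  have hl' : FromV rE sE (A.d (A.unit v)) l := by rwa [A.d_unit]
  apply A.faithful
  · rw [A.d_res _ l hl', A.d_unit, A.d_unit]
  · rw [A.c_res _ l hl', A.c_unit, A.c_unit, A.act_unit v l hl]
  · intro m hm
    rw [A.d_res _ l hl', A.d_unit] at hm
    have hm' : FromV rE sE (trailSrc sE (A.d (A.unit v)) l) m := by rwa [A.d_unit]
    have hsplit := A.act_append _ l m hl' hm'
    rw [A.act_unit v _ (fromV_append_iff.2 ⟨hl, hm⟩), A.act_unit v l hl] at hsplit
    rw [A.act_unit _ m hm]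
    exact (List.append_cancel_left hsplit).symm

lemma res_mul (hgh : A.d h = A.c g) (hl : FromV rE sE (A.d g) l) :
    A.res (A.mul h g) l = A.mul (A.res h (A.act g l)) (A.res g l) := by
  have hgl : FromV rE sE (A.d h) (A.act g l) := hgh ▸ A.act_fromV g l hl
  have hcomp : A.d (A.res h (A.act g l)) = A.c (A.res g l) := by
    rw [A.d_res _ _ hgl, A.c_res _ _ hl, hgh]
  have hl' : FromV rE sE (A.d (A.mul h g)) l := by rwa [A.d_mul g h hgh]
  apply A.faithful
  · rw [A.d_res _ l hl', A.d_mul _ _ hcomp, A.d_res g l hl, A.d_mul g h hgh]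
  · rw [A.c_res _ l hl', A.c_mul _ _ hcomp, A.c_res h _ hgl, A.c_mul g h hgh,
      A.act_mul g h l hgh hl]
  · intro m hm
    rw [A.d_res _ l hl', A.d_mul g h hgh] at hm
    have hm_g : FromV rE sE (A.d (A.res g l)) m := by rwa [A.d_res g l hl]
    have hgm : FromV rE sE (trailSrc sE (A.d h) (A.act g l)) (A.act (A.res g l) m) := by
      have := A.act_fromV _ m hm_g
      rwa [A.c_res g l hl, ← hgh] at this
    have key : A.act (A.mul h g) l ++ A.act (A.res (A.mul h g) l) m =
        A.act (A.mul h g) l ++ A.act (A.res h (A.act g l)) (A.act (A.res g l) m) := by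
      rw [← A.act_append _ l m hl' (by rwa [A.d_mul g h hgh]),
        A.act_mul g h _ hgh (fromV_append_iff.2 ⟨hl, hm⟩), A.act_append g l m hl hm,
        A.act_append h _ _ hgl hgm, A.act_mul g h l hgh hl]
    rw [List.append_cancel_left key, A.act_mul _ _ m hcomp hm_g]

lemma inv_mul_cancel_left {x p : A.G} (hp : A.d x = A.c p) :
    A.mul (A.inv x) (A.mul x p) = p := by
  rw [A.mul_assoc p x (A.inv x) hp (A.d_inv x), A.inv_mul, hp, A.unit_mul]

lemma mul_left_cancel {x p q : A.G} (hp : A.d x = A.c p) (hq : A.d x = A.c q)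
    (h : A.mul x p = A.mul x q) : p = q := by
  rw [← A.inv_mul_cancel_left hp, h, A.inv_mul_cancel_left hq]

lemma c_eq_of_act_eq (hd : A.d g = A.d h) (hl : FromV rE sE (A.d g) l) (hne : l ≠ [])
    (hact : A.act g l = A.act h l) : A.c g = A.c h := by
  have hne' : A.act g l ≠ [] := by
    rwa [← List.length_pos_iff, A.act_length g l hl, List.length_pos_iff]
  have hfrom_h : FromV rE sE (A.c h) (A.act g l) := hact ▸ A.act_fromV h l (hd ▸ hl)
  rw [← (A.act_fromV g l hl).rE_head hne', ← hfrom_h.rE_head hne']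

lemma act_inv_mul_of_act_eq (hd : A.d g = A.d h) (hc : A.c g = A.c h)
    (hl : FromV rE sE (A.d g) l) (hact : A.act g l = A.act h l) :
    A.act (A.mul (A.inv h) g) l = l := by
  have hlh : FromV rE sE (A.d h) l := hd ▸ hl
  rw [A.act_mul g _ l (by rw [A.d_inv, hc]) hl, hact,
    ← A.act_mul h _ l (A.d_inv h) hlh, A.inv_mul, A.act_unit _ l hlh]

lemma res_eq_of_res_inv_mul_eq_unit (hd : A.d g = A.d h) (hc : A.c g = A.c h)
    (hl : FromV rE sE (A.d g) l) (hact : A.act g l = A.act h l)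
    (hres : A.res (A.mul (A.inv h) g) l = A.unit (trailSrc sE (A.d g) l)) :
    A.res g l = A.res h l := by
  have hlh : FromV rE sE (A.d h) l := hd ▸ hl
  have hg := A.res_mul (h := A.inv h) (by rw [A.d_inv, hc]) hl
  have hh := A.res_mul (h := A.inv h) (A.d_inv h) hlh
  rw [hres, hact] at hg
  rw [A.inv_mul, A.res_unit _ hlh, ← hd] at hh
  have hfrom : FromV rE sE (A.d (A.inv h)) (A.act h l) := by
    rw [A.d_inv]
    exact A.act_fromV h l hlh
  refine A.mul_left_cancel ?_ ?_ (hg.symm.trans hh)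
  · rw [A.d_res _ _ hfrom, A.c_res g l hl, A.d_inv, hc, hact]
  · rw [A.d_res _ _ hfrom, A.c_res h l hlh, A.d_inv]

def ActEqResNe (g h : A.G) (l : List E) : Prop :=
  FromV rE sE (A.d g) l ∧ A.act g l = A.act h l ∧ A.res g l ≠ A.res h l

variable {A}

lemma actEqResNe_of_append (hd : A.d g = A.d h) (hlm : A.ActEqResNe g h (l ++ m)) :
    A.ActEqResNe g h l := by
  obtain ⟨hlm, hact, hres⟩ := hlm
  obtain ⟨hl, hm⟩ := fromV_append_iff.1 hlm
  have hlh : FromV rE sE (A.d h) l := hd ▸ hl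
  have hmh : FromV rE sE (trailSrc sE (A.d h) l) m := hd ▸ hm
  rw [A.act_append g l m hl hm, A.act_append h l m hlh hmh] at hact
  have hact_l := (List.append_inj hact (by rw [A.act_length g l hl, A.act_length h l hlh])).1
  refine ⟨hl, hact_l, fun hres_l => hres ?_⟩
  rw [A.res_append g l m hl hm, A.res_append h l m hlh hmh, hres_l]

lemma Regular.not_forall_actEqResNe (hreg : A.Regular) (hd : A.d g = A.d h) (y : ℕ → E) :
    ¬ ∀ n, A.ActEqResNe g h ((List.range n).map y) := by
  intro hy
  have hpath (n : ℕ) : FromV rE sE (A.d g) ((List.range n).map y) := (hy n).1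
  let Y : RightPath rE sE := ⟨y, sE_eq_rE_succ_of_forall_fromV hpath⟩
  have hc : A.c g = A.c h := A.c_eq_of_act_eq hd (hpath 1) (by simp) (hy 1).2.1
  have hd' : A.d (A.mul (A.inv h) g) = A.d g := A.d_mul g _ (by rw [A.d_inv, hc])
  obtain ⟨n, -, hn⟩ := hreg (A.mul (A.inv h) g) Y
    (hd'.trans (rE_zero_of_forall_fromV hpath).symm)
    fun n => A.act_inv_mul_of_act_eq hd hc (hpath n) (hy n).2.1
  rw [hd'] at hn
  exact (hy n).2.2 (A.res_eq_of_res_inv_mul_eq_unit hd hc (hpath n) (hy n).2.1 hn)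

theorem Regular.eventually_res_eq_of_act_eq [Finite E] (hreg : A.Regular) (hd : A.d g = A.d h) :
    ∀ᶠ k in atTop, ∀ l, FromV rE sE (A.d g) l → k ≤ l.length →
      A.act g l = A.act h l → A.res g l = A.res h l := by
  obtain ⟨k, hk⟩ : ∃ k, ∀ l, A.ActEqResNe g h l → l.length < k := by
    by_contra! hlong
    obtain ⟨y, hy⟩ :=
      exists_seq_forall_map_range_of_prefix_closed (fun _ _ => actEqResNe_of_append hd) hlong
    exact hreg.not_forall_actEqResNe hd y hy
  refine eventually_atTop.2 ⟨k, fun k' hk' l hl hlen hact => ?_⟩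
  by_contra hres
  have := hk l ⟨hl, hact, hres⟩
  omega

end SSA

theorem regular_uniform_restriction_general
    [Fintype E] (rE sE : E → V) (A : SSA V E rE sE)
    (hreg : A.Regular)
    (F : Set A.G) (hF : F.Finite) :
    ∃ k : ℕ, ∀ g ∈ F, ∀ h ∈ F, A.d g = A.d h →
      ∀ l : List E, FromV rE sE (A.d g) l → k ≤ l.length →
        A.act g l = A.act h l → A.res g l = A.res h l := by
  obtain ⟨k, hk⟩ := eventually_atTop.1 <|
    (eventually_all_finite ((hF.prod hF).sep fun p => A.d p.1 = A.d p.2)).2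
      fun _ hp => hreg.eventually_res_eq_of_act_eq hp.2
  exact ⟨k, fun g hg h hh hd => hk k le_rfl (g, h) ⟨⟨hg, hh⟩, hd⟩⟩

/-- for a regular action on a finite graph with no sources,
restrictions of elements of a finite set along long enough paths are
determined by their action on that path. -/
theorem regular_uniform_restriction
    [Fintype V] [Fintype E] (rE sE : E → V) (A : SSA V E rE sE)
    (hreg : A.Regular) (hso : NoSources rE)
    (F : Set A.G) (hF : F.Finite) :
    ∃ k : ℕ, ∀ g ∈ F, ∀ h ∈ F, A.d g = A.d h →
      ∀ l : List E, FromV rE sE (A.d g) l → k ≤ l.length →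
        A.act g l = A.act h l → A.res g l = A.res h l :=
  regular_uniform_restriction_general rE sE A hreg F hF

end SSG
end
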